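/- arXiv:2605.23760 — 3 statements merged into one kernel-verified Lean document; each statement's English description precedes it below -/
import Mathlib

section
/- Let (V_j, Y_j)_{1≤j≤n} be an i.i.d. sample of a pair of random variables (V, Y), and let g, h be integrable functions with gh integrable. Let F_n be the σ-algebra generated by V_1, ..., V_n, and let τ_n be an F_n-measurable random permutation of {1,...,n} with τ_n(j) ≠ j for all j. Then for each j, E[g(Y_j) h(Y_{τ_n(j)}) | V_1, ..., V_n] = Ψ_{V_j}(g) · Ψ_{V_{τ_n(j)}}(h), where Ψ_v(g) = E[g(Y) | V = v]. -/
open MeasureTheory ProbabilityTheory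

section Aux

lemma prod_integral_of_indep {Ω : Type*} [m0 : MeasurableSpace Ω] {μ : Measure Ω}
    [IsProbabilityMeasure μ] {W : ℕ → Ω → ℝ}
    (hW : iIndepFun W μ) (hWm : ∀ k, Measurable (W k))
    (hWint : ∀ k, Integrable (W k) μ) (s : Finset ℕ) :
    Integrable (fun ω => ∏ k ∈ s, W k ω) μ ∧
      ∫ ω, ∏ k ∈ s, W k ω ∂μ = ∏ k ∈ s, ∫ ω, W k ω ∂μ := by
  classical
  letI : MeasurableSpace Ω := m0
  induction s using Finset.induction_on with
  | empty => simp
  | insert i s his ih =>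
    obtain ⟨ihint, iheq⟩ := ih
    have hip : IndepFun (W i) (fun ω => ∏ k ∈ s, W k ω) μ := by
      have := (hW.indepFun_finsetProd_of_notMem hWm his).symm
      have heq : (∏ k ∈ s, W k) = fun ω => ∏ k ∈ s, W k ω := by
        funext ω; simp [Finset.prod_apply]
      rwa [heq] at this
    have hint : Integrable (fun ω => W i ω * ∏ k ∈ s, W k ω) μ :=
      hip.integrable_mul (hWint i) ihint
    constructor
    · simpa [Finset.prod_insert his] using hint
    · rw [show (fun ω => ∏ k ∈ insert i s, W k ω) = fun ω => W i ω * ∏ k ∈ s, W k ω by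
        funext ω; rw [Finset.prod_insert his]]
      rw [Finset.prod_insert his, ← iheq]
      simpa using hip.integral_fun_mul_eq_mul_integral (hWint i).1 ihint.1

lemma prod_ite_pair {n p q : ℕ} (hp : p < n) (hq : q < n) (hpq : p ≠ q) (c : ℕ → ℝ)
    (hc : ∀ k, k ≠ p → k ≠ q → c k = 1) :
    ∏ k ∈ Finset.range n, c k = c p * c q := by
  classical
  rw [← Finset.mul_prod_erase _ c (Finset.mem_range.mpr hp),
    ← Finset.mul_prod_erase _ c
      (Finset.mem_erase.mpr ⟨Ne.symm hpq, Finset.mem_range.mpr hq⟩),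
    Finset.prod_eq_one, mul_one]
  intro k hk
  have h1 : k ≠ q := (Finset.mem_erase.mp hk).1
  have h2 : k ≠ p := (Finset.mem_erase.mp (Finset.mem_erase.mp hk).2).1
  exact hc k h2 h1

end Aux

/-- **Generalized Chatterjee product identity (Lemma `pfChatt`).**
Let `(V_j, Y_j)` be an i.i.d. sample of a pair `(V, Y)` of real random variables, and
`g, h` such that `g ∘ Y`, `h ∘ Y` and `(g·h) ∘ Y` are integrable.  Let `F_n` be the
σ-algebra generated by `V_1, ..., V_n` and `τ` an `F_n`-measurable random permutation
of `{1,...,n}` with no fixed point.  If `Ψg, Ψh : ℝ → ℝ` are measurable functions such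
that `Ψg ∘ V_j` (resp. `Ψh ∘ V_j`) is a version of `E[g(Y_j) | V_j]`
(resp. `E[h(Y_j) | V_j]`), then for every `j`,
`E[g(Y_j) h(Y_{τ(j)}) | V_1,...,V_n] = Ψg(V_j) · Ψh(V_{τ(j)})` almost surely. -/
theorem chatterjee_product_identity
    {Ω : Type*} [m0 : MeasurableSpace Ω] (μ : Measure Ω) [IsProbabilityMeasure μ]
    (n : ℕ) (V Y : ℕ → Ω → ℝ)
    (hVmeas : ∀ j, Measurable (V j)) (hYmeas : ∀ j, Measurable (Y j))
    -- the pairs `(V_j, Y_j)` are independent and identically distributed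
    (hindep : iIndepFun
      (fun j ω => (V j ω, Y j ω)) μ)
    (hident : ∀ j, IdentDistrib (fun ω => (V j ω, Y j ω)) (fun ω => (V 0 ω, Y 0 ω)) μ μ)
    (g h : ℝ → ℝ) (hg : Measurable g) (hh : Measurable h)
    -- integrability of `g(Y)`, `h(Y)` and `(gh)(Y)`
    (hgint : Integrable (fun ω => g (Y 0 ω)) μ)
    (hhint : Integrable (fun ω => h (Y 0 ω)) μ)
    (hghint : Integrable (fun ω => g (Y 0 ω) * h (Y 0 ω)) μ)
    -- `F_n`, the σ-algebra generated by `V_1, ..., V_n`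
    (Fn : MeasurableSpace Ω)
    (hFn : Fn = ⨆ j ∈ Finset.range n, MeasurableSpace.comap (V j) inferInstance)
    -- `τ` is an `F_n`-measurable random permutation of `{0,...,n-1}` without fixed point
    (τ : Ω → ℕ → ℕ)
    (hτperm : ∀ ω, Set.BijOn (τ ω) (Set.Iio n) (Set.Iio n))
    (hτmeas : ∀ j l, MeasurableSet[Fn] {ω | τ ω j = l})
    (hτnofix : ∀ ω, ∀ j < n, τ ω j ≠ j)
    -- `Ψg` and `Ψh` are versions of the conditional expectation operators
    (Ψg Ψh : ℝ → ℝ) (hΨg : Measurable Ψg) (hΨh : Measurable Ψh)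
    (hΨgver : ∀ j, (fun ω => Ψg (V j ω))
      =ᵐ[μ] μ[fun ω => g (Y j ω) | MeasurableSpace.comap (V j) inferInstance])
    (hΨhver : ∀ j, (fun ω => Ψh (V j ω))
      =ᵐ[μ] μ[fun ω => h (Y j ω) | MeasurableSpace.comap (V j) inferInstance])
    (j : ℕ) (hj : j < n) :
    μ[fun ω => g (Y j ω) * h (Y (τ ω j) ω) | Fn]
      =ᵐ[μ] fun ω => Ψg (V j ω) * Ψh (V (τ ω j) ω) := by
  classical
  letI : MeasurableSpace Ω := m0
  have hle : Fn ≤ m0 := by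
    rw [hFn]; exact iSup₂_le fun i _ => (hVmeas i).comap_le
  haveI : IsFiniteMeasure (μ.trim hle) := isFiniteMeasure_trim hle
  -- basic integrability facts
  have hgY : ∀ k, Integrable (fun ω => g (Y k ω)) μ := fun k =>
    ((hident k).comp (hg.comp measurable_snd)).integrable_iff.mpr hgint
  have hhY : ∀ k, Integrable (fun ω => h (Y k ω)) μ := fun k =>
    ((hident k).comp (hh.comp measurable_snd)).integrable_iff.mpr hhint
  have hghY : ∀ k, Integrable (fun ω => g (Y k ω) * h (Y k ω)) μ := fun k =>
    ((hident k).comp ((hg.comp measurable_snd).mul (hh.comp measurable_snd))).integrable_iff.mpr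
      hghint
  have hΨgV : ∀ k, Integrable (fun ω => Ψg (V k ω)) μ := fun k =>
    integrable_condExp.congr (hΨgver k).symm
  have hΨhV : ∀ k, Integrable (fun ω => Ψh (V k ω)) μ := fun k =>
    integrable_condExp.congr (hΨhver k).symm
  have hcomap_le : ∀ k, k < n → MeasurableSpace.comap (V k) inferInstance ≤ Fn := by
    intro k hk
    rw [hFn]
    exact le_iSup₂ (f := fun i (_ : i ∈ Finset.range n) =>
      MeasurableSpace.comap (V i) inferInstance) k (Finset.mem_range.mpr hk)
  have hXm : ∀ k, Measurable (fun ω => (V k ω, Y k ω)) := fun k =>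
    (hVmeas k).prodMk (hYmeas k)
  have hmulint : ∀ p q, p ≠ q → Integrable (fun ω => g (Y p ω) * h (Y q ω)) μ := by
    intro p q hpq
    have hi : IndepFun (fun ω => g (Y p ω)) (fun ω => h (Y q ω)) μ :=
      (hindep.indepFun hpq).comp (hg.comp measurable_snd) (hh.comp measurable_snd)
    exact hi.integrable_mul (hgY p) (hhY q)
  have hΨmulint : ∀ p q, p ≠ q → Integrable (fun ω => Ψg (V p ω) * Ψh (V q ω)) μ := by
    intro p q hpq
    have hi : IndepFun (fun ω => Ψg (V p ω)) (fun ω => Ψh (V q ω)) μ :=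
      (hindep.indepFun hpq).comp (hΨg.comp measurable_fst) (hΨh.comp measurable_fst)
    exact hi.integrable_mul (hΨgV p) (hΨhV q)
  -- the π-system generating Fn
  set C : Set (Set Ω) := piiUnionInter
    (fun i => {s | MeasurableSet[MeasurableSpace.comap (V i) inferInstance] s})
    ↑(Finset.range n) with hCdef
  have hgen : Fn = MeasurableSpace.generateFrom C := by
    have hg2 := generateFrom_piiUnionInter_measurableSet
      (fun i => MeasurableSpace.comap (V i) inferInstance) (↑(Finset.range n) : Set ℕ)
    rw [hFn, hCdef, hg2]
    congr
  have hpiC : IsPiSystem C :=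
    isPiSystem_piiUnionInter _
      (fun i => @MeasurableSpace.isPiSystem_measurableSet Ω (MeasurableSpace.comap (V i) inferInstance)) _
  -- key identity for a fixed pair of distinct indices
  have key : ∀ p q, p < n → q < n → p ≠ q →
      μ[fun ω => g (Y p ω) * h (Y q ω)|Fn] =ᵐ[μ] fun ω => Ψg (V p ω) * Ψh (V q ω) := by
    intro p q hp hq hpq
    -- rectangle sets
    have hbasic : ∀ t ∈ C, ∫ x in t, Ψg (V p x) * Ψh (V q x) ∂μ
        = ∫ x in t, g (Y p x) * h (Y q x) ∂μ := by
      rintro t ⟨T, hTS, f, hfmem, rfl⟩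
      choose B hBm hBp using fun (x : ℕ) (hx : x ∈ T) =>
        (MeasurableSpace.measurableSet_comap.mp (hfmem x hx))
      set B' : ℕ → Set ℝ := fun k => if hk : k ∈ T then B k hk else Set.univ with hB'
      have hB'm : ∀ k, MeasurableSet (B' k) := by
        intro k
        by_cases hk : k ∈ T
        · simp only [hB', dif_pos hk]; exact hBm k hk
        · simp only [hB', dif_neg hk]; exact MeasurableSet.univ
      have htset : (⋂ x ∈ T, f x) = ⋂ k ∈ Finset.range n, V k ⁻¹' (B' k) := by
        ext ω
        simp only [Set.mem_iInter, Set.mem_preimage]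
        constructor
        · intro hω k _
          by_cases hkT : k ∈ T
          · have h1 := hω k hkT
            rw [← hBp k hkT] at h1
            simpa only [hB', dif_pos hkT, Set.mem_preimage] using h1
          · simp [hB', dif_neg hkT]
        · intro hω k hk
          have hkr : k ∈ Finset.range n := by
            have := hTS (Finset.mem_coe.mpr hk); simpa using this
          have h1 := hω k hkr
          rw [← hBp k hk]
          simpa only [hB', dif_pos hk, Set.mem_preimage] using h1
      have htmeas : MeasurableSet (⋂ x ∈ T, f x) := by
        rw [htset]
        exact Finset.measurableSet_biInter _ fun k _ => (hVmeas k) (hB'm k)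
      -- factor functions
      set u : ℕ → ℝ × ℝ → ℝ := fun k x =>
        (B' k).indicator (fun _ => (1:ℝ)) x.1 *
          (if k = p then g x.2 else if k = q then h x.2 else 1) with hu
      set u' : ℕ → ℝ × ℝ → ℝ := fun k x =>
        (B' k).indicator (fun _ => (1:ℝ)) x.1 *
          (if k = p then Ψg x.1 else if k = q then Ψh x.1 else 1) with hu'
      have hum : ∀ k, Measurable (u k) := by
        intro k
        apply Measurable.mul ((measurable_const.indicator (hB'm k)).comp measurable_fst)
        split_ifs
        · exact hg.comp measurable_snd
        · exact hh.comp measurable_snd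
        · exact measurable_const
      have hu'm : ∀ k, Measurable (u' k) := by
        intro k
        apply Measurable.mul ((measurable_const.indicator (hB'm k)).comp measurable_fst)
        split_ifs
        · exact hΨg.comp measurable_fst
        · exact hΨh.comp measurable_fst
        · exact measurable_const
      have hueq : ∀ k, (fun ω => u k (V k ω, Y k ω)) = Set.indicator (V k ⁻¹' B' k)
          (fun ω => if k = p then g (Y k ω) else if k = q then h (Y k ω) else 1) := by
        intro k
        funext ω
        by_cases hω : V k ω ∈ B' k <;>
          simp [hu, Set.indicator_apply, hω]
      have hu'eq : ∀ k, (fun ω => u' k (V k ω, Y k ω)) = Set.indicator (V k ⁻¹' B' k)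
          (fun ω => if k = p then Ψg (V k ω) else if k = q then Ψh (V k ω) else 1) := by
        intro k
        funext ω
        by_cases hω : V k ω ∈ B' k <;>
          simp [hu', Set.indicator_apply, hω]
      have huint : ∀ k, Integrable (fun ω => u k (V k ω, Y k ω)) μ := by
        intro k
        rw [hueq k]
        apply Integrable.indicator _ ((hVmeas k) (hB'm k))
        split_ifs
        · exact hgY k
        · exact hhY k
        · exact integrable_const 1
      have hu'int : ∀ k, Integrable (fun ω => u' k (V k ω, Y k ω)) μ := by
        intro k
        rw [hu'eq k]
        apply Integrable.indicator _ ((hVmeas k) (hB'm k))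
        split_ifs
        · exact hΨgV k
        · exact hΨhV k
        · exact integrable_const 1
      have hiu : iIndepFun
          (fun k => (u k) ∘ (fun ω => (V k ω, Y k ω))) μ := hindep.comp u hum
      have hiu' : iIndepFun
          (fun k => (u' k) ∘ (fun ω => (V k ω, Y k ω))) μ := hindep.comp u' hu'm
      obtain ⟨hint1, heq1⟩ := prod_integral_of_indep hiu
        (fun k => (hum k).comp (hXm k)) huint (Finset.range n)
      obtain ⟨hint2, heq2⟩ := prod_integral_of_indep hiu'
        (fun k => (hu'm k).comp (hXm k)) hu'int (Finset.range n)
      -- pointwise product identities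
      have hprodind : ∀ ω, (∏ k ∈ Finset.range n, (B' k).indicator (fun _ => (1:ℝ)) (V k ω))
          = Set.indicator (⋂ x ∈ T, f x) (fun _ => (1:ℝ)) ω := by
        intro ω
        by_cases hω : ω ∈ ⋂ x ∈ T, f x
        · rw [Set.indicator_of_mem hω]
          apply Finset.prod_eq_one
          intro k hk
          rw [htset] at hω
          simp only [Set.mem_iInter, Set.mem_preimage] at hω
          exact Set.indicator_of_mem (hω k hk) _
        · rw [Set.indicator_of_notMem hω]
          rw [htset] at hω
          simp only [Set.mem_iInter, Set.mem_preimage, not_forall] at hω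
          obtain ⟨k, hk, hVk⟩ := hω
          exact Finset.prod_eq_zero hk (Set.indicator_of_notMem hVk _)
      have hpoint1 : ∀ ω, Set.indicator (⋂ x ∈ T, f x)
          (fun ω' => g (Y p ω') * h (Y q ω')) ω
          = ∏ k ∈ Finset.range n, u k (V k ω, Y k ω) := by
        intro ω
        have h1 : ∏ k ∈ Finset.range n, u k (V k ω, Y k ω)
            = (∏ k ∈ Finset.range n, (B' k).indicator (fun _ => (1:ℝ)) (V k ω)) *
              ∏ k ∈ Finset.range n,
                (if k = p then g (Y k ω) else if k = q then h (Y k ω) else 1) := by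
          rw [← Finset.prod_mul_distrib]
        have h2 : (∏ k ∈ Finset.range n,
            (if k = p then g (Y k ω) else if k = q then h (Y k ω) else 1))
            = g (Y p ω) * h (Y q ω) := by
          rw [prod_ite_pair hp hq hpq _ (fun k hkp hkq => by simp [hkp, hkq])]
          simp [hpq, Ne.symm hpq]
        rw [h1, h2, hprodind ω]
        by_cases hω : ω ∈ ⋂ x ∈ T, f x <;>
          simp [Set.indicator_of_mem, Set.indicator_of_notMem, hω]
      have hpoint2 : ∀ ω, Set.indicator (⋂ x ∈ T, f x)
          (fun ω' => Ψg (V p ω') * Ψh (V q ω')) ω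
          = ∏ k ∈ Finset.range n, u' k (V k ω, Y k ω) := by
        intro ω
        have h1 : ∏ k ∈ Finset.range n, u' k (V k ω, Y k ω)
            = (∏ k ∈ Finset.range n, (B' k).indicator (fun _ => (1:ℝ)) (V k ω)) *
              ∏ k ∈ Finset.range n,
                (if k = p then Ψg (V k ω) else if k = q then Ψh (V k ω) else 1) := by
          rw [← Finset.prod_mul_distrib]
        have h2 : (∏ k ∈ Finset.range n,
            (if k = p then Ψg (V k ω) else if k = q then Ψh (V k ω) else 1))
            = Ψg (V p ω) * Ψh (V q ω) := by
          rw [prod_ite_pair hp hq hpq _ (fun k hkp hkq => by simp [hkp, hkq])]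
          simp [hpq, Ne.symm hpq]
        rw [h1, h2, hprodind ω]
        by_cases hω : ω ∈ ⋂ x ∈ T, f x <;>
          simp [Set.indicator_of_mem, Set.indicator_of_notMem, hω]
      -- per-factor integral equalities
      have hfac : ∀ k ∈ Finset.range n,
          ∫ ω, u' k (V k ω, Y k ω) ∂μ = ∫ ω, u k (V k ω, Y k ω) ∂μ := by
        intro k _
        rcases eq_or_ne k p with rfl | hkp
        · haveI : IsFiniteMeasure (μ.trim (hVmeas k).comap_le) :=
            isFiniteMeasure_trim _
          have hs : MeasurableSet[MeasurableSpace.comap (V k) inferInstance]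
              (V k ⁻¹' B' k) := ⟨B' k, hB'm k, rfl⟩
          have e1 : (fun ω => u k (V k ω, Y k ω))
              = Set.indicator (V k ⁻¹' B' k) (fun ω => g (Y k ω)) := by
            rw [hueq k]; congr 1; funext ω; simp
          have e2 : (fun ω => u' k (V k ω, Y k ω))
              = Set.indicator (V k ⁻¹' B' k) (fun ω => Ψg (V k ω)) := by
            rw [hu'eq k]; congr 1; funext ω; simp
          rw [e1, e2, integral_indicator ((hVmeas k) (hB'm k)),
            integral_indicator ((hVmeas k) (hB'm k))]
          rw [setIntegral_congr_ae ((hVmeas k) (hB'm k))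
            ((hΨgver k).mono fun ω hω _ => hω)]
          exact setIntegral_condExp (hVmeas k).comap_le (hgY k) hs
        rcases eq_or_ne k q with rfl | hkq
        · haveI : IsFiniteMeasure (μ.trim (hVmeas k).comap_le) :=
            isFiniteMeasure_trim _
          have hs : MeasurableSet[MeasurableSpace.comap (V k) inferInstance]
              (V k ⁻¹' B' k) := ⟨B' k, hB'm k, rfl⟩
          have e1 : (fun ω => u k (V k ω, Y k ω))
              = Set.indicator (V k ⁻¹' B' k) (fun ω => h (Y k ω)) := by
            rw [hueq k]; congr 1; funext ω; simp [hkp]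
          have e2 : (fun ω => u' k (V k ω, Y k ω))
              = Set.indicator (V k ⁻¹' B' k) (fun ω => Ψh (V k ω)) := by
            rw [hu'eq k]; congr 1; funext ω; simp [hkp]
          rw [e1, e2, integral_indicator ((hVmeas k) (hB'm k)),
            integral_indicator ((hVmeas k) (hB'm k))]
          rw [setIntegral_congr_ae ((hVmeas k) (hB'm k))
            ((hΨhver k).mono fun ω hω _ => hω)]
          exact setIntegral_condExp (hVmeas k).comap_le (hhY k) hs
        · have : u' k = u k := by
            funext x; simp [hu, hu', if_neg hkp, if_neg hkq]
          rw [this]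
      -- put things together
      calc ∫ x in ⋂ x ∈ T, f x, Ψg (V p x) * Ψh (V q x) ∂μ
          = ∫ ω, Set.indicator (⋂ x ∈ T, f x)
              (fun ω' => Ψg (V p ω') * Ψh (V q ω')) ω ∂μ :=
            (integral_indicator htmeas).symm
        _ = ∫ ω, ∏ k ∈ Finset.range n, u' k (V k ω, Y k ω) ∂μ := by
            exact integral_congr_ae (Filter.Eventually.of_forall fun ω => hpoint2 ω)
        _ = ∏ k ∈ Finset.range n, ∫ ω, u' k (V k ω, Y k ω) ∂μ := heq2
        _ = ∏ k ∈ Finset.range n, ∫ ω, u k (V k ω, Y k ω) ∂μ :=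
            Finset.prod_congr rfl hfac
        _ = ∫ ω, ∏ k ∈ Finset.range n, u k (V k ω, Y k ω) ∂μ := heq1.symm
        _ = ∫ ω, Set.indicator (⋂ x ∈ T, f x)
              (fun ω' => g (Y p ω') * h (Y q ω')) ω ∂μ :=
            integral_congr_ae (Filter.Eventually.of_forall fun ω => (hpoint1 ω).symm)
        _ = ∫ x in ⋂ x ∈ T, f x, g (Y p x) * h (Y q x) ∂μ := integral_indicator htmeas
    have hunivmem : Set.univ ∈ C := by
      refine ⟨∅, by simp, fun _ => Set.univ, by simp, by simp⟩
    have huniv : ∫ x, Ψg (V p x) * Ψh (V q x) ∂μ = ∫ x, g (Y p x) * h (Y q x) ∂μ := by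
      have h1 := hbasic Set.univ hunivmem
      simpa [Measure.restrict_univ] using h1
    refine (ae_eq_condExp_of_forall_setIntegral_eq hle (hmulint p q hpq)
      (fun s _ _ => (hΨmulint p q hpq).integrableOn)
      (fun s hs _ => ?_) ?_).symm
    · revert hs
      refine MeasurableSpace.induction_on_inter
        (C := fun t _ => ∫ x in t, Ψg (V p x) * Ψh (V q x) ∂μ
          = ∫ x in t, g (Y p x) * h (Y q x) ∂μ) hgen hpiC ?_ hbasic ?_ ?_ s
      · simp
      · intro t ht heq
        have htm : MeasurableSet t := hle _ ht
        have e1 := integral_add_compl htm (hΨmulint p q hpq)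
        have e2 := integral_add_compl htm (hmulint p q hpq)
        have := huniv
        linarith
      · intro f hdisj hfm hfeq
        rw [integral_iUnion (fun i => hle _ (hfm i)) hdisj
            (hΨmulint p q hpq).integrableOn,
          integral_iUnion (fun i => hle _ (hfm i)) hdisj
            (hmulint p q hpq).integrableOn]
        exact tsum_congr hfeq
    · have hVp : Measurable[Fn] (V p) :=
        (Measurable.of_comap_le le_rfl).mono (hcomap_le p hp) le_rfl
      have hVq : Measurable[Fn] (V q) :=
        (Measurable.of_comap_le le_rfl).mono (hcomap_le q hq) le_rfl
      exact (Measurable.stronglyMeasurable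
        ((hΨg.comp hVp).mul (hΨh.comp hVq))).aestronglyMeasurable
  -- assembly via the partition given by the value of τ · j
  have hsum1 : (fun ω => g (Y j ω) * h (Y (τ ω j) ω))
      = ∑ l ∈ Finset.range n,
          Set.indicator {ω' | τ ω' j = l} (fun ω' => g (Y j ω') * h (Y l ω')) := by
    funext ω
    rw [Finset.sum_apply, Finset.sum_eq_single (τ ω j)]
    · have hmem : ω ∈ {ω' : Ω | τ ω' j = τ ω j} := rfl
      exact (Set.indicator_of_mem hmem (fun ω' => g (Y j ω') * h (Y (τ ω j) ω'))).symm
    · intro b _ hb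
      apply Set.indicator_of_notMem
      intro hmem
      simp only [Set.mem_setOf_eq] at hmem
      exact hb hmem.symm
    · intro habs
      exact absurd (Finset.mem_range.mpr (Set.BijOn.mapsTo (hτperm ω) (Set.mem_Iio.mpr hj))) habs
  have hsum2 : (fun ω => Ψg (V j ω) * Ψh (V (τ ω j) ω))
      = ∑ l ∈ Finset.range n,
          Set.indicator {ω' | τ ω' j = l} (fun ω' => Ψg (V j ω') * Ψh (V l ω')) := by
    funext ω
    rw [Finset.sum_apply, Finset.sum_eq_single (τ ω j)]
    · have hmem : ω ∈ {ω' : Ω | τ ω' j = τ ω j} := rfl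
      exact (Set.indicator_of_mem hmem (fun ω' => Ψg (V j ω') * Ψh (V (τ ω j) ω'))).symm
    · intro b _ hb
      apply Set.indicator_of_notMem
      intro hmem
      simp only [Set.mem_setOf_eq] at hmem
      exact hb hmem.symm
    · intro habs
      exact absurd (Finset.mem_range.mpr (Set.BijOn.mapsTo (hτperm ω) (Set.mem_Iio.mpr hj))) habs
  have hint_l : ∀ l ∈ Finset.range n, Integrable
      (Set.indicator {ω' | τ ω' j = l} (fun ω' => g (Y j ω') * h (Y l ω'))) μ := by
    intro l _
    apply Integrable.indicator _ (hle _ (hτmeas j l))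
    rcases eq_or_ne l j with hlj | hlj
    · rw [hlj]; exact hghY j
    · exact hmulint j l (Ne.symm hlj)
  have hterm : ∀ l ∈ Finset.range n,
      (μ[Set.indicator {ω' | τ ω' j = l} (fun ω' => g (Y j ω') * h (Y l ω'))|Fn])
        =ᵐ[μ] Set.indicator {ω' | τ ω' j = l} (fun ω' => Ψg (V j ω') * Ψh (V l ω')) := by
    intro l hl
    rcases eq_or_ne l j with hlj | hlj
    · rw [hlj]
      have hempty : {ω' | τ ω' j = j} = (∅ : Set Ω) := by
        apply Set.eq_empty_iff_forall_notMem.mpr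
        intro ω hω
        simp only [Set.mem_setOf_eq] at hω
        exact hτnofix ω j hj hω
      rw [hempty]
      simp only [Set.indicator_empty]
      have hz : (fun _ : Ω => (0:ℝ)) = (0 : Ω → ℝ) := rfl
      rw [hz, condExp_zero]
    · refine (condExp_indicator (hmulint j l (Ne.symm hlj)) (hτmeas j l)).trans ?_
      filter_upwards [key j l hj (Finset.mem_range.mp hl) (Ne.symm hlj)] with ω hω
      by_cases hmem : ω ∈ {ω' | τ ω' j = l} <;>
        simp [Set.indicator_of_mem, Set.indicator_of_notMem, hmem, hω]
  rw [hsum1, hsum2]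
  refine (condExp_finsetSum hint_l Fn).trans ?_
  have hall : ∀ᵐ ω ∂μ, ∀ l ∈ Finset.range n,
      (μ[Set.indicator {ω' | τ ω' j = l} (fun ω' => g (Y j ω') * h (Y l ω'))|Fn]) ω
        = Set.indicator {ω' | τ ω' j = l} (fun ω' => Ψg (V j ω') * Ψh (V l ω')) ω := by
    rw [Filter.eventually_all_finset]
    exact hterm
  filter_upwards [hall] with ω hω
  rw [Finset.sum_apply, Finset.sum_apply]
  exact Finset.sum_congr rfl hω
end

section
/- Let (V_j)_{1≤j≤n} be i.i.d. random variables with diffuse law, and let τ_n be an F_n-measurable random permutation of {1,...,n} with no fixed point such that V_{τ_n(i)} and V_{τ_n(j)} have the same distribution for all i, j. Then for any bounded measurable function φ, E[φ(V_{τ_n(1)})] = E[φ(V_1)]. -/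
open MeasureTheory ProbabilityTheory

/-- Let `V_1, ..., V_n` be i.i.d. random variables with diffuse (atomless) law and let
`τ` be an `F_n`-measurable random permutation of `{1,...,n}` with no fixed point, such
that `V_{τ(i)}` and `V_{τ(j)}` have the same distribution for all `i, j`.  Then for any
bounded measurable `φ`, `E[φ(V_{τ(1)})] = E[φ(V_1)]`. -/
theorem perm_preserves_law
    {Ω : Type*} [m0 : MeasurableSpace Ω] (μ : Measure Ω) [IsProbabilityMeasure μ]
    (n : ℕ) (hn : 0 < n) (V : ℕ → Ω → ℝ)
    (hVmeas : ∀ j, Measurable (V j))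
    -- i.i.d. sample
    (hindep : iIndepFun V μ)
    (hident : ∀ j, IdentDistrib (V j) (V 0) μ μ)
    -- diffuse law
    (hdiffuse : ∀ x : ℝ, μ.map (V 0) {x} = 0)
    (τ : Ω → ℕ → ℕ)
    (hτperm : ∀ ω, Set.BijOn (τ ω) (Set.Iio n) (Set.Iio n))
    (hτnofix : ∀ ω, ∀ j < n, τ ω j ≠ j)
    -- `V_{τ(i)}` and `V_{τ(j)}` are identically distributed
    (hτident : ∀ i < n, ∀ j < n,
      IdentDistrib (fun ω => V (τ ω i) ω) (fun ω => V (τ ω j) ω) μ μ)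
    -- `τ` is measurable w.r.t. `F_n`, the σ-algebra generated by `V_1, ..., V_n`
    (Fn : MeasurableSpace Ω)
    (hFn : Fn = ⨆ j ∈ Finset.range n, MeasurableSpace.comap (V j) inferInstance)
    (hτmeas : ∀ j l, MeasurableSet[Fn] {ω | τ ω j = l})
    -- bounded measurable test function
    (φ : ℝ → ℝ) (hφ : Measurable φ) (hφbdd : ∃ M, ∀ x, |φ x| ≤ M) :
    ∫ ω, φ (V (τ ω 0) ω) ∂μ = ∫ ω, φ (V 0 ω) ∂μ := by
  obtain ⟨M, hM⟩ := hφbdd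
  have hFn_le : Fn ≤ m0 := by
    rw [hFn]
    exact iSup_le fun j => iSup_le fun _ => (hVmeas j).comap_le
  have hτmeas' : ∀ j l, MeasurableSet[m0] {ω | τ ω j = l} := fun j l => hFn_le _ (hτmeas j l)
  clear hτmeas hFn hFn_le hindep hτnofix hdiffuse
  clear Fn
  have hmeas : ∀ j < n, Measurable (fun ω => V (τ ω j) ω) := by
    intro j hj
    have heq : (fun ω => V (τ ω j) ω) =
        fun ω => ∑ l ∈ Finset.range n, if τ ω j = l then V l ω else 0 := by
      funext ω
      have hlt : τ ω j < n := (hτperm ω).mapsTo hj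
      rw [Finset.sum_eq_single (τ ω j)]
      · simp
      · intro b _ hb; simp [Ne.symm hb]
      · intro h; exact absurd (Finset.mem_range.mpr hlt) h
    rw [heq]
    exact Finset.measurable_sum _ fun l _ =>
      Measurable.ite (hτmeas' j l) (hVmeas l) measurable_const
  have hint : ∀ j < n, Integrable (fun ω => φ (V (τ ω j) ω)) μ := by
    intro j hj
    refine (integrable_const M).mono' ((hφ.comp (hmeas j hj)).aestronglyMeasurable) ?_
    filter_upwards with ω
    simpa [Real.norm_eq_abs] using hM _
  have hintV : ∀ l : ℕ, Integrable (fun ω => φ (V l ω)) μ := by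
    intro l
    refine (integrable_const M).mono' ((hφ.comp (hVmeas l)).aestronglyMeasurable) ?_
    filter_upwards with ω
    simpa [Real.norm_eq_abs] using hM _
  have hsum : ∀ ω, ∑ j ∈ Finset.range n, φ (V (τ ω j) ω)
      = ∑ l ∈ Finset.range n, φ (V l ω) := by
    intro ω
    refine Finset.sum_bij (fun j _ => τ ω j) ?_ ?_ ?_ ?_
    · intro a ha
      exact Finset.mem_range.mpr ((hτperm ω).mapsTo (Finset.mem_range.mp ha))
    · intro a ha b hb h
      exact (hτperm ω).injOn (Finset.mem_range.mp ha) (Finset.mem_range.mp hb) h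
    · intro b hb
      obtain ⟨a, ha, hab⟩ := (hτperm ω).surjOn (Finset.mem_range.mp hb)
      exact ⟨a, Finset.mem_range.mpr ha, hab⟩
    · intro a ha; rfl
  have h1 : ∑ j ∈ Finset.range n, ∫ ω, φ (V (τ ω j) ω) ∂μ
      = ∑ l ∈ Finset.range n, ∫ ω, φ (V l ω) ∂μ := by
    rw [← integral_finset_sum _ (fun j hj => hint j (Finset.mem_range.mp hj)),
        ← integral_finset_sum _ (fun l _ => hintV l)]
    exact integral_congr_ae (Filter.Eventually.of_forall hsum)
  have h2 : ∀ j ∈ Finset.range n, ∫ ω, φ (V (τ ω j) ω) ∂μ = ∫ ω, φ (V (τ ω 0) ω) ∂μ := by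
    intro j hj
    exact ((hτident j (Finset.mem_range.mp hj) 0 hn).comp hφ).integral_eq
  have h3 : ∀ l ∈ Finset.range n, ∫ ω, φ (V l ω) ∂μ = ∫ ω, φ (V 0 ω) ∂μ := by
    intro l _
    exact ((hident l).comp hφ).integral_eq
  rw [Finset.sum_congr rfl h2, Finset.sum_congr rfl h3, Finset.sum_const, Finset.sum_const,
    Finset.card_range, nsmul_eq_mul, nsmul_eq_mul] at h1
  have hn' : (n : ℝ) ≠ 0 := Nat.cast_ne_zero.mpr hn.ne'
  exact mul_left_cancel₀ hn' h1
end

section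
/- Let Y = α X_1 + X_2 + ... + X_p with α > 0 and X_1, ..., X_p i.i.d. uniform on [0,1], and let Y¹ = α X_1 + X'_2 + ... + X'_p be the Pick-Freeze copy with respect to X_1 (where X'_2,...,X'_p are independent copies). Set m_{1,p} = (p−1)/2 and v_p = (p−1)/12. Then Var(Y Y¹) = (4/45)α⁴ + (1/3) m_{1,p} α³ + (1/3)(2 v_p + m_{1,p}²) α² + 2 m_{1,p} v_p α + v_p (v_p + 2 m_{1,p}²). -/
open MeasureTheory ProbabilityTheory

lemma unif_ae_mem {Ω : Type*} [MeasurableSpace Ω] {μ : Measure Ω} {g : Ω → ℝ}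
    (hg : Measurable g) (h : μ.map g = volume.restrict (Set.Icc (0:ℝ) 1)) :
    ∀ᵐ ω ∂μ, g ω ∈ Set.Icc (0:ℝ) 1 := by
  have h0 : μ (g ⁻¹' (Set.Icc (0:ℝ) 1)ᶜ) = 0 := by
    rw [← Measure.map_apply hg measurableSet_Icc.compl, h,
      Measure.restrict_apply measurableSet_Icc.compl]
    simp
  rw [ae_iff]
  exact h0

lemma unif_moment {Ω : Type*} [MeasurableSpace Ω] {μ : Measure Ω} {g : Ω → ℝ}
    (hg : Measurable g) (h : μ.map g = volume.restrict (Set.Icc (0:ℝ) 1)) (k : ℕ) :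
    ∫ ω, g ω ^ k ∂μ = 1 / ((k:ℝ) + 1) := by
  have : ∫ ω, g ω ^ k ∂μ = ∫ x, x ^ k ∂(μ.map g) :=
    (integral_map hg.aemeasurable (measurable_id.pow_const k).aestronglyMeasurable).symm
  rw [this, h]
  rw [MeasureTheory.integral_Icc_eq_integral_Ioc,
    ← intervalIntegral.integral_of_le (zero_le_one (α := ℝ)), integral_pow]
  simp

lemma pf_sum_moments {Ω : Type*} [MeasurableSpace Ω] (μ : Measure Ω) [IsProbabilityMeasure μ]
    {n : ℕ} (s : Finset (Fin n)) (G : Fin n → Ω → ℝ)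
    (hmeas : ∀ i, Measurable (G i))
    (hu : ∀ i, μ.map (G i) = volume.restrict (Set.Icc (0:ℝ) 1))
    (hind : ∀ i j, i ≠ j → IndepFun (G i) (G j) μ) :
    (∫ ω, ∑ i ∈ s, G i ω ∂μ = (s.card : ℝ) / 2) ∧
    (∫ ω, (∑ i ∈ s, G i ω) ^ 2 ∂μ
      = (s.card : ℝ) / 3 + (s.card : ℝ) * ((s.card : ℝ) - 1) / 4) := by
  have mg : ∀ (i : Fin n) (k : ℕ), ∫ ω, G i ω ^ k ∂μ = 1 / ((k:ℝ) + 1) :=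
    fun i k => unif_moment (hmeas i) (hu i) k
  have hae : ∀ i, ∀ᵐ ω ∂μ, G i ω ∈ Set.Icc (0:ℝ) 1 :=
    fun i => unif_ae_mem (hmeas i) (hu i)
  have intG : ∀ i, Integrable (G i) μ := by
    intro i
    refine Integrable.mono' (integrable_const 1) (hmeas i).aestronglyMeasurable ?_
    filter_upwards [hae i] with ω h
    rw [Real.norm_eq_abs, abs_of_nonneg h.1]; exact h.2
  have intGG : ∀ i j, Integrable (fun ω => G i ω * G j ω) μ := by
    intro i j
    refine Integrable.mono' (integrable_const 1) ((hmeas i).mul (hmeas j)).aestronglyMeasurable ?_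
    filter_upwards [hae i, hae j] with ω h1 h2
    rw [Real.norm_eq_abs, abs_of_nonneg (mul_nonneg h1.1 h2.1)]
    calc G i ω * G j ω ≤ 1 * 1 := mul_le_mul h1.2 h2.2 h2.1 zero_le_one
      _ = 1 := by norm_num
  constructor
  · rw [integral_finset_sum s (fun i _ => intG i)]
    have h1 : ∀ i ∈ s, ∫ ω, G i ω ∂μ = 1/2 := by
      intro i _
      have h1 := mg i 1
      simp only [pow_one] at h1
      rw [h1]; norm_num
    rw [Finset.sum_congr rfl h1, Finset.sum_const, nsmul_eq_mul]
    ring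
  · have hsq : (fun ω => (∑ i ∈ s, G i ω) ^ 2)
        = fun ω => ∑ i ∈ s, ∑ j ∈ s, G i ω * G j ω := by
      funext ω; rw [sq, Finset.sum_mul_sum]
    rw [hsq, integral_finset_sum s (fun i _ => integrable_finset_sum s (fun j _ => intGG i j))]
    have inner : ∀ i ∈ s, ∫ ω, ∑ j ∈ s, G i ω * G j ω ∂μ
        = 1/3 + ((s.card : ℝ) - 1) / 4 := by
      intro i hi
      rw [integral_finset_sum s (fun j _ => intGG i j)]
      rw [← Finset.add_sum_erase s _ hi]
      have hii : ∫ ω, G i ω * G i ω ∂μ = 1/3 := by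
        have h2 := mg i 2
        rw [show (∫ ω, G i ω * G i ω ∂μ) = ∫ ω, G i ω ^ 2 ∂μ from by
          congr 1; funext ω; ring, h2]
        norm_num
      have val : ∀ j ∈ s.erase i, ∫ ω, G i ω * G j ω ∂μ = 1/4 := by
        intro j hj
        have hij : i ≠ j := (Finset.ne_of_mem_erase hj).symm
        rw [(hind i j hij).integral_fun_mul_eq_mul_integral (hmeas i).aestronglyMeasurable
          (hmeas j).aestronglyMeasurable]
        have a1 := mg i 1
        have a2 := mg j 1
        simp only [pow_one] at a1 a2
        rw [a1, a2]; norm_num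
      rw [hii, Finset.sum_congr rfl val, Finset.sum_const, nsmul_eq_mul,
        Finset.card_erase_of_mem hi, Nat.cast_sub (Finset.one_le_card.2 ⟨i, hi⟩)]
      push_cast
      ring
    rw [Finset.sum_congr rfl inner, Finset.sum_const, nsmul_eq_mul]
    ring


set_option maxHeartbeats 3200000 in
/-- **Pick-Freeze limiting variance for the linear model.** Let
`Y = α X_1 + X_2 + ... + X_p` and `Y¹ = α X_1 + X'_2 + ... + X'_p` with `α > 0`,
where `X_1,...,X_p, X'_2,...,X'_p` are i.i.d. uniform on `[0,1]`.  With
`m = (p−1)/2` and `v = (p−1)/12`,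
`Var(Y·Y¹) = (4/45)α⁴ + (1/3)mα³ + (1/3)(2v + m²)α² + 2mvα + v(v + 2m²)`. -/
theorem pick_freeze_variance_linear_model
    {Ω : Type*} [MeasurableSpace Ω] (μ : Measure Ω) [IsProbabilityMeasure μ]
    (p : ℕ) (hp : 1 ≤ p) (α : ℝ) (hα : 0 < α)
    (X X' : Fin p → Ω → ℝ)
    (hXmeas : ∀ i, Measurable (X i)) (hX'meas : ∀ i, Measurable (X' i))
    -- the combined family is independent
    (hindep : iIndepFun (Sum.elim X X') μ)
    (hunif : ∀ i, μ.map (X i) = volume.restrict (Set.Icc (0:ℝ) 1))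
    (hunif' : ∀ i, μ.map (X' i) = volume.restrict (Set.Icc (0:ℝ) 1))
    (i₁ : Fin p) (hi₁ : i₁ = ⟨0, hp⟩)
    (Y Y1 : Ω → ℝ)
    (hY : Y = fun ω => α * X i₁ ω + ∑ i ∈ Finset.univ.erase i₁, X i ω)
    (hY1 : Y1 = fun ω => α * X i₁ ω + ∑ i ∈ Finset.univ.erase i₁, X' i ω)
    (m v : ℝ) (hm : m = ((p:ℝ) - 1) / 2) (hv : v = ((p:ℝ) - 1) / 12) :
    variance (fun ω => Y ω * Y1 ω) μ
      = (4/45) * α^4 + (1/3) * m * α^3 + (1/3) * (2*v + m^2) * α^2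
        + 2*m*v*α + v * (v + 2*m^2) := by
  classical
  set s : Finset (Fin p) := Finset.univ.erase i₁ with hs
  have hcard : (s.card : ℝ) = (p:ℝ) - 1 := by
    rw [hs, Finset.card_erase_of_mem (Finset.mem_univ _), Finset.card_univ,
      Fintype.card_fin, Nat.cast_sub hp]
    simp
  have hFmeas : ∀ j, Measurable (Sum.elim X X' j) := by
    rintro (i | i)
    exacts [hXmeas i, hX'meas i]
  set Z : Ω → ℝ := fun ω => ∑ i ∈ s, X i ω with hZ
  set W : Ω → ℝ := fun ω => ∑ i ∈ s, X' i ω with hW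
  have hZmeas : Measurable Z := Finset.measurable_sum _ fun i _ => hXmeas i
  have hWmeas : Measurable W := Finset.measurable_sum _ fun i _ => hX'meas i
  -- a.e. bounds
  have haeA : ∀ᵐ ω ∂μ, X i₁ ω ∈ Set.Icc (0:ℝ) 1 := unif_ae_mem (hXmeas i₁) (hunif i₁)
  have haeZ : ∀ᵐ ω ∂μ, 0 ≤ Z ω ∧ Z ω ≤ (p:ℝ) := by
    have hall : ∀ᵐ ω ∂μ, ∀ i : Fin p, X i ω ∈ Set.Icc (0:ℝ) 1 :=
      (ae_all_iff).2 fun i => unif_ae_mem (hXmeas i) (hunif i)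
    filter_upwards [hall] with ω hω
    refine ⟨Finset.sum_nonneg fun i _ => (hω i).1, ?_⟩
    calc Z ω ≤ ∑ i ∈ s, (1:ℝ) := Finset.sum_le_sum fun i _ => (hω i).2
      _ = (s.card : ℝ) := by simp
      _ ≤ (p:ℝ) := by rw [hcard]; linarith
  have haeW : ∀ᵐ ω ∂μ, 0 ≤ W ω ∧ W ω ≤ (p:ℝ) := by
    have hall : ∀ᵐ ω ∂μ, ∀ i : Fin p, X' i ω ∈ Set.Icc (0:ℝ) 1 :=
      (ae_all_iff).2 fun i => unif_ae_mem (hX'meas i) (hunif' i)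
    filter_upwards [hall] with ω hω
    refine ⟨Finset.sum_nonneg fun i _ => (hω i).1, ?_⟩
    calc W ω ≤ ∑ i ∈ s, (1:ℝ) := Finset.sum_le_sum fun i _ => (hω i).2
      _ = (s.card : ℝ) := by simp
      _ ≤ (p:ℝ) := by rw [hcard]; linarith
  -- integrability of monomials
  have intM : ∀ a b c : ℕ, Integrable (fun ω => X i₁ ω ^ a * Z ω ^ b * W ω ^ c) μ := by
    intro a b c
    have hmeas : Measurable fun ω => X i₁ ω ^ a * Z ω ^ b * W ω ^ c :=
      (((hXmeas i₁).pow_const a).mul (hZmeas.pow_const b)).mul (hWmeas.pow_const c)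
    refine Integrable.mono' (integrable_const ((1:ℝ) ^ a * (p:ℝ) ^ b * (p:ℝ) ^ c))
      hmeas.aestronglyMeasurable ?_
    filter_upwards [haeA, haeZ, haeW] with ω h1 h2 h3
    rw [Real.norm_eq_abs, abs_of_nonneg (mul_nonneg (mul_nonneg (pow_nonneg h1.1 a)
      (pow_nonneg h2.1 b)) (pow_nonneg h3.1 c))]
    have hp0 : (0:ℝ) ≤ (p:ℝ) := Nat.cast_nonneg p
    exact mul_le_mul (mul_le_mul (pow_le_pow_left₀ h1.1 h1.2 a)
      (pow_le_pow_left₀ h2.1 h2.2 b) (pow_nonneg h2.1 b) (by positivity))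
      (pow_le_pow_left₀ h3.1 h3.2 c) (pow_nonneg h3.1 c) (by positivity)
  -- independence: X i₁ vs Z
  have ind2 : IndepFun (X i₁) Z μ := by
    have hd1 : Disjoint ({Sum.inl i₁} : Finset (Fin p ⊕ Fin p)) (s.image Sum.inl) := by
      rw [Finset.disjoint_left]
      intro x hx hx'
      rw [Finset.mem_singleton] at hx
      subst hx
      obtain ⟨j, hj, hj'⟩ := Finset.mem_image.1 hx'
      have : j = i₁ := Sum.inl.inj hj'
      subst this
      exact (Finset.mem_erase.1 hj).1 rfl
    have base := hindep.indepFun_finset {Sum.inl i₁} (s.image Sum.inl) hd1 hFmeas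
    have hφ : Measurable (fun t : (({Sum.inl i₁} : Finset (Fin p ⊕ Fin p)) → ℝ) =>
        t ⟨Sum.inl i₁, Finset.mem_singleton_self _⟩) := measurable_pi_apply _
    have hψ : Measurable (fun t : (↥(s.image (Sum.inl : Fin p → Fin p ⊕ Fin p)) → ℝ) =>
        ∑ j ∈ (s.image Sum.inl).attach, t j) :=
      Finset.measurable_sum _ fun j _ => measurable_pi_apply j
    have hcomp := base.comp hφ hψ
    have e1 : ((fun t : (({Sum.inl i₁} : Finset (Fin p ⊕ Fin p)) → ℝ) =>
        t ⟨Sum.inl i₁, Finset.mem_singleton_self _⟩) ∘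
        (fun ω (i : ({Sum.inl i₁} : Finset (Fin p ⊕ Fin p))) => Sum.elim X X' i ω)) = X i₁ := rfl
    have e2 : ((fun t : (↥(s.image (Sum.inl : Fin p → Fin p ⊕ Fin p)) → ℝ) =>
        ∑ j ∈ (s.image Sum.inl).attach, t j) ∘
        (fun ω (i : ↥((s.image Sum.inl : Finset (Fin p ⊕ Fin p)))) => Sum.elim X X' i ω)) = Z := by
      funext ω
      show (∑ j ∈ (s.image Sum.inl).attach, Sum.elim X X' j.1 ω) = Z ω
      rw [Finset.sum_attach (s.image Sum.inl) (fun j => Sum.elim X X' j ω),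
        Finset.sum_image (fun x _ y _ h => Sum.inl.inj h)]
      rfl
    rwa [e1, e2] at hcomp
  -- independence: (X i₁ ^ a * Z ^ b) vs W ^ c
  have ind1 : ∀ a b c : ℕ, IndepFun (fun ω => X i₁ ω ^ a * Z ω ^ b)
      (fun ω => W ω ^ c) μ := by
    intro a b c
    have hd2 : Disjoint (Finset.univ.image (Sum.inl : Fin p → Fin p ⊕ Fin p))
        (s.image Sum.inr) := by
      rw [Finset.disjoint_left]
      intro x hx hx'
      obtain ⟨j, _, hj'⟩ := Finset.mem_image.1 hx
      obtain ⟨k, _, hk'⟩ := Finset.mem_image.1 hx'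
      rw [← hj'] at hk'
      exact Sum.inr_ne_inl hk'
    have base := hindep.indepFun_finset _ _ hd2 hFmeas
    have him : ∀ i : Fin p, (Sum.inl i : Fin p ⊕ Fin p) ∈
        Finset.univ.image (Sum.inl : Fin p → Fin p ⊕ Fin p) :=
      fun i => Finset.mem_image.2 ⟨i, Finset.mem_univ _, rfl⟩
    have hφ : Measurable (fun t : (↥(Finset.univ.image (Sum.inl : Fin p → Fin p ⊕ Fin p)) → ℝ) =>
        (t ⟨Sum.inl i₁, him i₁⟩) ^ a *
          (∑ i ∈ s.attach, t ⟨Sum.inl i.1, him i.1⟩) ^ b) :=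
      ((measurable_pi_apply _).pow_const a).mul
        ((Finset.measurable_sum (f := fun (i : ↥s) (t : ↥(Finset.univ.image (Sum.inl : Fin p → Fin p ⊕ Fin p)) → ℝ) =>
          t ⟨Sum.inl i.1, him i.1⟩) s.attach
          (fun i _ => by exact measurable_pi_apply _)).pow_const b)
    have hψ : Measurable (fun t : (↥(s.image (Sum.inr : Fin p → Fin p ⊕ Fin p)) → ℝ) =>
        (∑ j ∈ (s.image Sum.inr).attach, t j) ^ c) :=
      (Finset.measurable_sum _ fun j _ => measurable_pi_apply j).pow_const c
    have hcomp := base.comp hφ hψ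
    have e1 : ((fun t : (↥(Finset.univ.image (Sum.inl : Fin p → Fin p ⊕ Fin p)) → ℝ) =>
        (t ⟨Sum.inl i₁, him i₁⟩) ^ a *
          (∑ i ∈ s.attach, t ⟨Sum.inl i.1, him i.1⟩) ^ b) ∘
        (fun ω (i : ↥((Finset.univ.image (Sum.inl : Fin p → Fin p ⊕ Fin p) :
          Finset (Fin p ⊕ Fin p)))) => Sum.elim X X' i ω))
        = fun ω => X i₁ ω ^ a * Z ω ^ b := by
      funext ω
      show (Sum.elim X X' (Sum.inl i₁) ω) ^ a *
        (∑ i ∈ s.attach, Sum.elim X X' (Sum.inl i.1) ω) ^ b = X i₁ ω ^ a * Z ω ^ b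
      rw [Finset.sum_attach s (fun i => Sum.elim X X' (Sum.inl i) ω)]
      rfl
    have e2 : ((fun t : (↥(s.image (Sum.inr : Fin p → Fin p ⊕ Fin p)) → ℝ) =>
        (∑ j ∈ (s.image Sum.inr).attach, t j) ^ c) ∘
        (fun ω (i : ↥((s.image (Sum.inr : Fin p → Fin p ⊕ Fin p) :
          Finset (Fin p ⊕ Fin p)))) => Sum.elim X X' i ω))
        = fun ω => W ω ^ c := by
      funext ω
      show (∑ j ∈ (s.image Sum.inr).attach, Sum.elim X X' j.1 ω) ^ c = W ω ^ c
      rw [Finset.sum_attach (s.image Sum.inr) (fun j => Sum.elim X X' j ω),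
        Finset.sum_image (fun x _ y _ h => Sum.inr.inj h)]
      rfl
    rwa [e1, e2] at hcomp
  -- key factorization
  have ind2' : ∀ a b : ℕ, IndepFun (fun ω => X i₁ ω ^ a) (fun ω => Z ω ^ b) μ := by
    intro a b
    exact ind2.comp (measurable_id.pow_const a) (measurable_id.pow_const b)
  have key : ∀ a b c : ℕ, ∫ ω, X i₁ ω ^ a * Z ω ^ b * W ω ^ c ∂μ
      = (∫ ω, X i₁ ω ^ a ∂μ) * (∫ ω, Z ω ^ b ∂μ) * (∫ ω, W ω ^ c ∂μ) := by
    intro a b c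
    rw [(ind1 a b c).integral_fun_mul_eq_mul_integral
      (((hXmeas i₁).pow_const a).mul (hZmeas.pow_const b)).aestronglyMeasurable
      (hWmeas.pow_const c).aestronglyMeasurable]
    rw [(ind2' a b).integral_fun_mul_eq_mul_integral ((hXmeas i₁).pow_const a).aestronglyMeasurable
      (hZmeas.pow_const b).aestronglyMeasurable]
  -- moments
  have mA : ∀ k : ℕ, ∫ ω, X i₁ ω ^ k ∂μ = 1 / ((k:ℝ) + 1) :=
    fun k => unif_moment (hXmeas i₁) (hunif i₁) k
  have hindX : ∀ i j : Fin p, i ≠ j → IndepFun (X i) (X j) μ := by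
    intro i j hij
    exact hindep.indepFun (show (Sum.inl i : Fin p ⊕ Fin p) ≠ Sum.inl j by simpa using hij)
  have hindX' : ∀ i j : Fin p, i ≠ j → IndepFun (X' i) (X' j) μ := by
    intro i j hij
    exact hindep.indepFun (show (Sum.inr i : Fin p ⊕ Fin p) ≠ Sum.inr j by simpa using hij)
  have zmom := pf_sum_moments μ s X hXmeas hunif hindX
  have wmom := pf_sum_moments μ s X' hX'meas hunif' hindX'
  rw [hcard] at zmom wmom
  have hZ0 : ∫ ω, Z ω ^ 0 ∂μ = 1 := by simp
  have hW0 : ∫ ω, W ω ^ 0 ∂μ = 1 := by simp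
  have hZ1 : ∫ ω, Z ω ^ 1 ∂μ = ((p:ℝ) - 1) / 2 := by
    simp only [pow_one]; exact zmom.1
  have hW1 : ∫ ω, W ω ^ 1 ∂μ = ((p:ℝ) - 1) / 2 := by
    simp only [pow_one]; exact wmom.1
  have hZ2 : ∫ ω, Z ω ^ 2 ∂μ = ((p:ℝ) - 1) / 3 + ((p:ℝ) - 1) * (((p:ℝ) - 1) - 1) / 4 :=
    zmom.2
  have hW2 : ∫ ω, W ω ^ 2 ∂μ = ((p:ℝ) - 1) / 3 + ((p:ℝ) - 1) * (((p:ℝ) - 1) - 1) / 4 :=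
    wmom.2
  -- first moment of Y * Y1
  have hE1 : ∫ ω, Y ω * Y1 ω ∂μ
      = α^2 * (1/3) + α * (((p:ℝ) - 1) / 2) + (((p:ℝ) - 1) / 2) * (((p:ℝ) - 1) / 2) := by
    have hrw : (fun ω => Y ω * Y1 ω) = fun ω => α^2 * (X i₁ ω ^ 2 * Z ω ^ 0 * W ω ^ 0) + (α * (X i₁ ω ^ 1 * Z ω ^ 1 * W ω ^ 0) + (α * (X i₁ ω ^ 1 * Z ω ^ 0 * W ω ^ 1) + ((1:ℝ) * (X i₁ ω ^ 0 * Z ω ^ 1 * W ω ^ 1)))) := by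
      funext ω
      simp only [hY, hY1, hZ, hW]
      ring
    rw [hrw]
    have eA1 : ∫ ω, α^2 * (X i₁ ω ^ 2 * Z ω ^ 0 * W ω ^ 0) + (α * (X i₁ ω ^ 1 * Z ω ^ 1 * W ω ^ 0) + (α * (X i₁ ω ^ 1 * Z ω ^ 0 * W ω ^ 1) + ((1:ℝ) * (X i₁ ω ^ 0 * Z ω ^ 1 * W ω ^ 1)))) ∂μ
        = (∫ ω, α^2 * (X i₁ ω ^ 2 * Z ω ^ 0 * W ω ^ 0) ∂μ) + ∫ ω, α * (X i₁ ω ^ 1 * Z ω ^ 1 * W ω ^ 0) + (α * (X i₁ ω ^ 1 * Z ω ^ 0 * W ω ^ 1) + ((1:ℝ) * (X i₁ ω ^ 0 * Z ω ^ 1 * W ω ^ 1))) ∂μ :=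
      integral_add ((intM 2 0 0).const_mul (α^2)) (((intM 1 1 0).const_mul (α)).add (((intM 1 0 1).const_mul (α)).add ((intM 0 1 1).const_mul ((1:ℝ)))))
    have eA2 : ∫ ω, α * (X i₁ ω ^ 1 * Z ω ^ 1 * W ω ^ 0) + (α * (X i₁ ω ^ 1 * Z ω ^ 0 * W ω ^ 1) + ((1:ℝ) * (X i₁ ω ^ 0 * Z ω ^ 1 * W ω ^ 1))) ∂μ
        = (∫ ω, α * (X i₁ ω ^ 1 * Z ω ^ 1 * W ω ^ 0) ∂μ) + ∫ ω, α * (X i₁ ω ^ 1 * Z ω ^ 0 * W ω ^ 1) + ((1:ℝ) * (X i₁ ω ^ 0 * Z ω ^ 1 * W ω ^ 1)) ∂μ :=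
      integral_add ((intM 1 1 0).const_mul (α)) (((intM 1 0 1).const_mul (α)).add ((intM 0 1 1).const_mul ((1:ℝ))))
    have eA3 : ∫ ω, α * (X i₁ ω ^ 1 * Z ω ^ 0 * W ω ^ 1) + ((1:ℝ) * (X i₁ ω ^ 0 * Z ω ^ 1 * W ω ^ 1)) ∂μ
        = (∫ ω, α * (X i₁ ω ^ 1 * Z ω ^ 0 * W ω ^ 1) ∂μ) + ∫ ω, (1:ℝ) * (X i₁ ω ^ 0 * Z ω ^ 1 * W ω ^ 1) ∂μ :=
      integral_add ((intM 1 0 1).const_mul (α)) ((intM 0 1 1).const_mul ((1:ℝ)))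
    rw [eA1, eA2, eA3]
    rw [integral_const_mul, integral_const_mul, integral_const_mul, integral_const_mul]
    rw [key 2 0 0, key 1 1 0, key 1 0 1, key 0 1 1]
    rw [mA 2, mA 1, mA 0, hZ0, hZ1, hW0, hW1]
    push_cast
    ring
  -- second moment of Y * Y1
  have hE2 : ∫ ω, (Y ω * Y1 ω) ^ 2 ∂μ
      = α^4 * (1/5) + α^3 * (((p:ℝ) - 1) / 2)
        + (2/3) * α^2 * (((p:ℝ) - 1) / 3 + ((p:ℝ) - 1) * (((p:ℝ) - 1) - 1) / 4)
        + (4/3) * α^2 * (((p:ℝ) - 1) / 2) * (((p:ℝ) - 1) / 2)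
        + 2 * α * (((p:ℝ) - 1) / 2) * (((p:ℝ) - 1) / 3 + ((p:ℝ) - 1) * (((p:ℝ) - 1) - 1) / 4)
        + (((p:ℝ) - 1) / 3 + ((p:ℝ) - 1) * (((p:ℝ) - 1) - 1) / 4) ^ 2 := by
    have hrw : (fun ω => (Y ω * Y1 ω) ^ 2) = fun ω => α^4 * (X i₁ ω ^ 4 * Z ω ^ 0 * W ω ^ 0) + (2*α^3 * (X i₁ ω ^ 3 * Z ω ^ 1 * W ω ^ 0) + (2*α^3 * (X i₁ ω ^ 3 * Z ω ^ 0 * W ω ^ 1) + (α^2 * (X i₁ ω ^ 2 * Z ω ^ 2 * W ω ^ 0) + (α^2 * (X i₁ ω ^ 2 * Z ω ^ 0 * W ω ^ 2) + (4*α^2 * (X i₁ ω ^ 2 * Z ω ^ 1 * W ω ^ 1) + (2*α * (X i₁ ω ^ 1 * Z ω ^ 2 * W ω ^ 1) + (2*α * (X i₁ ω ^ 1 * Z ω ^ 1 * W ω ^ 2) + ((1:ℝ) * (X i₁ ω ^ 0 * Z ω ^ 2 * W ω ^ 2))))))))) := by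
      funext ω
      simp only [hY, hY1, hZ, hW]
      ring
    rw [hrw]
    have eB1 : ∫ ω, α^4 * (X i₁ ω ^ 4 * Z ω ^ 0 * W ω ^ 0) + (2*α^3 * (X i₁ ω ^ 3 * Z ω ^ 1 * W ω ^ 0) + (2*α^3 * (X i₁ ω ^ 3 * Z ω ^ 0 * W ω ^ 1) + (α^2 * (X i₁ ω ^ 2 * Z ω ^ 2 * W ω ^ 0) + (α^2 * (X i₁ ω ^ 2 * Z ω ^ 0 * W ω ^ 2) + (4*α^2 * (X i₁ ω ^ 2 * Z ω ^ 1 * W ω ^ 1) + (2*α * (X i₁ ω ^ 1 * Z ω ^ 2 * W ω ^ 1) + (2*α * (X i₁ ω ^ 1 * Z ω ^ 1 * W ω ^ 2) + ((1:ℝ) * (X i₁ ω ^ 0 * Z ω ^ 2 * W ω ^ 2))))))))) ∂μ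
        = (∫ ω, α^4 * (X i₁ ω ^ 4 * Z ω ^ 0 * W ω ^ 0) ∂μ) + ∫ ω, 2*α^3 * (X i₁ ω ^ 3 * Z ω ^ 1 * W ω ^ 0) + (2*α^3 * (X i₁ ω ^ 3 * Z ω ^ 0 * W ω ^ 1) + (α^2 * (X i₁ ω ^ 2 * Z ω ^ 2 * W ω ^ 0) + (α^2 * (X i₁ ω ^ 2 * Z ω ^ 0 * W ω ^ 2) + (4*α^2 * (X i₁ ω ^ 2 * Z ω ^ 1 * W ω ^ 1) + (2*α * (X i₁ ω ^ 1 * Z ω ^ 2 * W ω ^ 1) + (2*α * (X i₁ ω ^ 1 * Z ω ^ 1 * W ω ^ 2) + ((1:ℝ) * (X i₁ ω ^ 0 * Z ω ^ 2 * W ω ^ 2)))))))) ∂μ :=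
      integral_add ((intM 4 0 0).const_mul (α^4)) (((intM 3 1 0).const_mul (2*α^3)).add (((intM 3 0 1).const_mul (2*α^3)).add (((intM 2 2 0).const_mul (α^2)).add (((intM 2 0 2).const_mul (α^2)).add (((intM 2 1 1).const_mul (4*α^2)).add (((intM 1 2 1).const_mul (2*α)).add (((intM 1 1 2).const_mul (2*α)).add ((intM 0 2 2).const_mul ((1:ℝ))))))))))
    have eB2 : ∫ ω, 2*α^3 * (X i₁ ω ^ 3 * Z ω ^ 1 * W ω ^ 0) + (2*α^3 * (X i₁ ω ^ 3 * Z ω ^ 0 * W ω ^ 1) + (α^2 * (X i₁ ω ^ 2 * Z ω ^ 2 * W ω ^ 0) + (α^2 * (X i₁ ω ^ 2 * Z ω ^ 0 * W ω ^ 2) + (4*α^2 * (X i₁ ω ^ 2 * Z ω ^ 1 * W ω ^ 1) + (2*α * (X i₁ ω ^ 1 * Z ω ^ 2 * W ω ^ 1) + (2*α * (X i₁ ω ^ 1 * Z ω ^ 1 * W ω ^ 2) + ((1:ℝ) * (X i₁ ω ^ 0 * Z ω ^ 2 * W ω ^ 2)))))))) ∂μ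
        = (∫ ω, 2*α^3 * (X i₁ ω ^ 3 * Z ω ^ 1 * W ω ^ 0) ∂μ) + ∫ ω, 2*α^3 * (X i₁ ω ^ 3 * Z ω ^ 0 * W ω ^ 1) + (α^2 * (X i₁ ω ^ 2 * Z ω ^ 2 * W ω ^ 0) + (α^2 * (X i₁ ω ^ 2 * Z ω ^ 0 * W ω ^ 2) + (4*α^2 * (X i₁ ω ^ 2 * Z ω ^ 1 * W ω ^ 1) + (2*α * (X i₁ ω ^ 1 * Z ω ^ 2 * W ω ^ 1) + (2*α * (X i₁ ω ^ 1 * Z ω ^ 1 * W ω ^ 2) + ((1:ℝ) * (X i₁ ω ^ 0 * Z ω ^ 2 * W ω ^ 2))))))) ∂μ :=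
      integral_add ((intM 3 1 0).const_mul (2*α^3)) (((intM 3 0 1).const_mul (2*α^3)).add (((intM 2 2 0).const_mul (α^2)).add (((intM 2 0 2).const_mul (α^2)).add (((intM 2 1 1).const_mul (4*α^2)).add (((intM 1 2 1).const_mul (2*α)).add (((intM 1 1 2).const_mul (2*α)).add ((intM 0 2 2).const_mul ((1:ℝ)))))))))
    have eB3 : ∫ ω, 2*α^3 * (X i₁ ω ^ 3 * Z ω ^ 0 * W ω ^ 1) + (α^2 * (X i₁ ω ^ 2 * Z ω ^ 2 * W ω ^ 0) + (α^2 * (X i₁ ω ^ 2 * Z ω ^ 0 * W ω ^ 2) + (4*α^2 * (X i₁ ω ^ 2 * Z ω ^ 1 * W ω ^ 1) + (2*α * (X i₁ ω ^ 1 * Z ω ^ 2 * W ω ^ 1) + (2*α * (X i₁ ω ^ 1 * Z ω ^ 1 * W ω ^ 2) + ((1:ℝ) * (X i₁ ω ^ 0 * Z ω ^ 2 * W ω ^ 2))))))) ∂μ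
        = (∫ ω, 2*α^3 * (X i₁ ω ^ 3 * Z ω ^ 0 * W ω ^ 1) ∂μ) + ∫ ω, α^2 * (X i₁ ω ^ 2 * Z ω ^ 2 * W ω ^ 0) + (α^2 * (X i₁ ω ^ 2 * Z ω ^ 0 * W ω ^ 2) + (4*α^2 * (X i₁ ω ^ 2 * Z ω ^ 1 * W ω ^ 1) + (2*α * (X i₁ ω ^ 1 * Z ω ^ 2 * W ω ^ 1) + (2*α * (X i₁ ω ^ 1 * Z ω ^ 1 * W ω ^ 2) + ((1:ℝ) * (X i₁ ω ^ 0 * Z ω ^ 2 * W ω ^ 2)))))) ∂μ :=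
      integral_add ((intM 3 0 1).const_mul (2*α^3)) (((intM 2 2 0).const_mul (α^2)).add (((intM 2 0 2).const_mul (α^2)).add (((intM 2 1 1).const_mul (4*α^2)).add (((intM 1 2 1).const_mul (2*α)).add (((intM 1 1 2).const_mul (2*α)).add ((intM 0 2 2).const_mul ((1:ℝ))))))))
    have eB4 : ∫ ω, α^2 * (X i₁ ω ^ 2 * Z ω ^ 2 * W ω ^ 0) + (α^2 * (X i₁ ω ^ 2 * Z ω ^ 0 * W ω ^ 2) + (4*α^2 * (X i₁ ω ^ 2 * Z ω ^ 1 * W ω ^ 1) + (2*α * (X i₁ ω ^ 1 * Z ω ^ 2 * W ω ^ 1) + (2*α * (X i₁ ω ^ 1 * Z ω ^ 1 * W ω ^ 2) + ((1:ℝ) * (X i₁ ω ^ 0 * Z ω ^ 2 * W ω ^ 2)))))) ∂μ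
        = (∫ ω, α^2 * (X i₁ ω ^ 2 * Z ω ^ 2 * W ω ^ 0) ∂μ) + ∫ ω, α^2 * (X i₁ ω ^ 2 * Z ω ^ 0 * W ω ^ 2) + (4*α^2 * (X i₁ ω ^ 2 * Z ω ^ 1 * W ω ^ 1) + (2*α * (X i₁ ω ^ 1 * Z ω ^ 2 * W ω ^ 1) + (2*α * (X i₁ ω ^ 1 * Z ω ^ 1 * W ω ^ 2) + ((1:ℝ) * (X i₁ ω ^ 0 * Z ω ^ 2 * W ω ^ 2))))) ∂μ :=
      integral_add ((intM 2 2 0).const_mul (α^2)) (((intM 2 0 2).const_mul (α^2)).add (((intM 2 1 1).const_mul (4*α^2)).add (((intM 1 2 1).const_mul (2*α)).add (((intM 1 1 2).const_mul (2*α)).add ((intM 0 2 2).const_mul ((1:ℝ)))))))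
    have eB5 : ∫ ω, α^2 * (X i₁ ω ^ 2 * Z ω ^ 0 * W ω ^ 2) + (4*α^2 * (X i₁ ω ^ 2 * Z ω ^ 1 * W ω ^ 1) + (2*α * (X i₁ ω ^ 1 * Z ω ^ 2 * W ω ^ 1) + (2*α * (X i₁ ω ^ 1 * Z ω ^ 1 * W ω ^ 2) + ((1:ℝ) * (X i₁ ω ^ 0 * Z ω ^ 2 * W ω ^ 2))))) ∂μ
        = (∫ ω, α^2 * (X i₁ ω ^ 2 * Z ω ^ 0 * W ω ^ 2) ∂μ) + ∫ ω, 4*α^2 * (X i₁ ω ^ 2 * Z ω ^ 1 * W ω ^ 1) + (2*α * (X i₁ ω ^ 1 * Z ω ^ 2 * W ω ^ 1) + (2*α * (X i₁ ω ^ 1 * Z ω ^ 1 * W ω ^ 2) + ((1:ℝ) * (X i₁ ω ^ 0 * Z ω ^ 2 * W ω ^ 2)))) ∂μ :=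
      integral_add ((intM 2 0 2).const_mul (α^2)) (((intM 2 1 1).const_mul (4*α^2)).add (((intM 1 2 1).const_mul (2*α)).add (((intM 1 1 2).const_mul (2*α)).add ((intM 0 2 2).const_mul ((1:ℝ))))))
    have eB6 : ∫ ω, 4*α^2 * (X i₁ ω ^ 2 * Z ω ^ 1 * W ω ^ 1) + (2*α * (X i₁ ω ^ 1 * Z ω ^ 2 * W ω ^ 1) + (2*α * (X i₁ ω ^ 1 * Z ω ^ 1 * W ω ^ 2) + ((1:ℝ) * (X i₁ ω ^ 0 * Z ω ^ 2 * W ω ^ 2)))) ∂μ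
        = (∫ ω, 4*α^2 * (X i₁ ω ^ 2 * Z ω ^ 1 * W ω ^ 1) ∂μ) + ∫ ω, 2*α * (X i₁ ω ^ 1 * Z ω ^ 2 * W ω ^ 1) + (2*α * (X i₁ ω ^ 1 * Z ω ^ 1 * W ω ^ 2) + ((1:ℝ) * (X i₁ ω ^ 0 * Z ω ^ 2 * W ω ^ 2))) ∂μ :=
      integral_add ((intM 2 1 1).const_mul (4*α^2)) (((intM 1 2 1).const_mul (2*α)).add (((intM 1 1 2).const_mul (2*α)).add ((intM 0 2 2).const_mul ((1:ℝ)))))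
    have eB7 : ∫ ω, 2*α * (X i₁ ω ^ 1 * Z ω ^ 2 * W ω ^ 1) + (2*α * (X i₁ ω ^ 1 * Z ω ^ 1 * W ω ^ 2) + ((1:ℝ) * (X i₁ ω ^ 0 * Z ω ^ 2 * W ω ^ 2))) ∂μ
        = (∫ ω, 2*α * (X i₁ ω ^ 1 * Z ω ^ 2 * W ω ^ 1) ∂μ) + ∫ ω, 2*α * (X i₁ ω ^ 1 * Z ω ^ 1 * W ω ^ 2) + ((1:ℝ) * (X i₁ ω ^ 0 * Z ω ^ 2 * W ω ^ 2)) ∂μ :=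
      integral_add ((intM 1 2 1).const_mul (2*α)) (((intM 1 1 2).const_mul (2*α)).add ((intM 0 2 2).const_mul ((1:ℝ))))
    have eB8 : ∫ ω, 2*α * (X i₁ ω ^ 1 * Z ω ^ 1 * W ω ^ 2) + ((1:ℝ) * (X i₁ ω ^ 0 * Z ω ^ 2 * W ω ^ 2)) ∂μ
        = (∫ ω, 2*α * (X i₁ ω ^ 1 * Z ω ^ 1 * W ω ^ 2) ∂μ) + ∫ ω, (1:ℝ) * (X i₁ ω ^ 0 * Z ω ^ 2 * W ω ^ 2) ∂μ :=
      integral_add ((intM 1 1 2).const_mul (2*α)) ((intM 0 2 2).const_mul ((1:ℝ)))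
    rw [eB1, eB2, eB3, eB4, eB5, eB6, eB7, eB8]
    rw [integral_const_mul, integral_const_mul, integral_const_mul, integral_const_mul,
      integral_const_mul, integral_const_mul, integral_const_mul, integral_const_mul,
      integral_const_mul]
    rw [key 4 0 0, key 3 1 0, key 3 0 1, key 2 2 0, key 2 0 2, key 2 1 1, key 1 2 1, key 1 1 2, key 0 2 2]
    rw [mA 4, mA 3, mA 2, mA 1, mA 0, hZ0, hZ1, hZ2, hW0, hW1, hW2]
    push_cast
    ring
  -- conclude
  have hYmeas : Measurable Y := by
    rw [hY]
    exact (measurable_const.mul (hXmeas i₁)).add (Finset.measurable_sum _ fun i _ => hXmeas i)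
  have hY1meas : Measurable Y1 := by
    rw [hY1]
    exact (measurable_const.mul (hXmeas i₁)).add (Finset.measurable_sum _ fun i _ => hX'meas i)
  have hL2 : MemLp (fun ω => Y ω * Y1 ω) 2 μ := by
    refine MemLp.of_bound (hYmeas.mul hY1meas).aestronglyMeasurable
      ((α + (p:ℝ)) * (α + (p:ℝ))) ?_
    filter_upwards [haeA, haeZ, haeW] with ω h1 h2 h3
    have hYb : |Y ω| ≤ α + (p:ℝ) := by
      rw [hY]
      show |α * X i₁ ω + Z ω| ≤ α + (p:ℝ)
      rw [abs_of_nonneg (by nlinarith [h1.1, h2.1, hα.le] : (0:ℝ) ≤ α * X i₁ ω + Z ω)]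
      nlinarith [h1.2, h2.2, hα.le]
    have hY1b : |Y1 ω| ≤ α + (p:ℝ) := by
      rw [hY1]
      show |α * X i₁ ω + W ω| ≤ α + (p:ℝ)
      rw [abs_of_nonneg (by nlinarith [h1.1, h3.1, hα.le] : (0:ℝ) ≤ α * X i₁ ω + W ω)]
      nlinarith [h1.2, h3.2, hα.le]
    rw [Real.norm_eq_abs, abs_mul]
    have h0 : (0:ℝ) ≤ α + (p:ℝ) := by positivity
    exact mul_le_mul hYb hY1b (abs_nonneg _) h0
  rw [variance_eq_sub hL2]
  have hsqfun : (fun ω => Y ω * Y1 ω) ^ 2 = fun ω => (Y ω * Y1 ω) ^ 2 := by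
    funext ω; simp
  rw [hsqfun]
  show (∫ ω, (Y ω * Y1 ω) ^ 2 ∂μ) - (∫ ω, Y ω * Y1 ω ∂μ) ^ 2 = _
  rw [hE2, hE1, hm, hv]
  ring
end
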